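/- arXiv:2003.04455 — 2 statements merged into one kernel-verified Lean document; each statement's English description precedes it below -/
import Mathlib

section
/- Let ω₁, ω₂ : 𝔻 → ℂ be analytic with |ω₁(z)| < 1 and |ω₂(z)| < 1 on the unit disk 𝔻, let λ ∈ ℂ with |λ| = 1, and let t ∈ [0,1]. Suppose h₁, h₂, g₁, g₂ are analytic on 𝔻 with gⱼ' = ωⱼ hⱼ', hⱼ' nonvanishing, and h₁ - λg₁ = h₂ - λg₂ (so (h₁ - λg₁)' = (h₂ - λg₂)' =: φ' is nonvanishing). Then the function ω₃ = (t g₁' + (1-t) g₂')/(t h₁' + (1-t) h₂') satisfies |ω₃(z)| < 1 for all z ∈ 𝔻. -/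
/-!
Write `uⱼ = λωⱼ`, so `‖uⱼ‖ < 1` and `φ' = h₁'(1 - u₁) = h₂'(1 - u₂)`. Then
`t h₁' + (1 - t) h₂' = φ' A` and `λ(t g₁' + (1 - t) g₂') = φ' (A - 1)` with
`A = t/(1 - u₁) + (1 - t)/(1 - u₂)`. The map `u ↦ 1/(1 - u)` sends the unit disk into the
half-plane `Re > 1/2`, which is convex, so `Re A > 1/2`, i.e. `‖A - 1‖ < ‖A‖`.
-/

open Complex Metric

namespace Complex

lemma half_lt_re_inv_one_sub {u : ℂ} (hu : ‖u‖ < 1) : 1 / 2 < (1 - u)⁻¹.re := by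
  have hu' : u.re * u.re + u.im * u.im < 1 := by
    rw [← normSq_apply, ← Complex.sq_norm]; nlinarith [norm_nonneg u]
  have hpos : 0 < normSq (1 - u) := by
    rw [normSq_apply]; simp only [sub_re, one_re, sub_im, one_im]
    nlinarith [sq_nonneg u.im]
  rw [inv_re, lt_div_iff₀ hpos, normSq_apply]
  simp only [sub_re, one_re, sub_im, one_im]
  nlinarith

lemma norm_sub_one_lt_norm {A : ℂ} (hA : 1 / 2 < A.re) : ‖A - 1‖ < ‖A‖ := by
  rw [← sq_lt_sq₀ (norm_nonneg _) (norm_nonneg _), Complex.sq_norm, Complex.sq_norm,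
    normSq_apply, normSq_apply]
  simp only [sub_re, one_re, sub_im, one_im]
  nlinarith

lemma norm_div_lt_one_of_mul_one_sub_eq {a b u₁ u₂ : ℂ} {t : ℝ} (ht : t ∈ Set.Icc (0 : ℝ) 1)
    (hu₁ : ‖u₁‖ < 1) (hu₂ : ‖u₂‖ < 1) (hab : a * (1 - u₁) = b * (1 - u₂)) :
    ‖(t * (u₁ * a) + (1 - t) * (u₂ * b)) / (t * a + (1 - t) * b)‖ < 1 := by
  have hd₁ : 1 - u₁ ≠ 0 := sub_ne_zero.2 fun h ↦ by simp [← h] at hu₁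
  have hd₂ : 1 - u₂ ≠ 0 := sub_ne_zero.2 fun h ↦ by simp [← h] at hu₂
  set p := a * (1 - u₁)
  set A : ℂ := t • (1 - u₁)⁻¹ + (1 - t) • (1 - u₂)⁻¹
  have hA : 1 / 2 < A.re :=
    convex_halfSpace_re_gt _ (half_lt_re_inv_one_sub hu₁) (half_lt_re_inv_one_sub hu₂)
      ht.1 (sub_nonneg.2 ht.2) (add_sub_cancel _ _)
  have ha : a = p / (1 - u₁) := eq_div_of_mul_eq hd₁ rfl
  have hb : b = p / (1 - u₂) := eq_div_of_mul_eq hd₂ hab.symm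
  have hden : t * a + (1 - t) * b = p * A := by
    simp only [A, real_smul, ofReal_sub, ofReal_one, ha, hb]; ring
  have hnum : t * (u₁ * a) + (1 - t) * (u₂ * b) = p * (A - 1) := by
    simp only [A, real_smul, ofReal_sub, ofReal_one, ha, hb]; field_simp; ring
  have hlt : ‖A - 1‖ < ‖A‖ := norm_sub_one_lt_norm hA
  rcases eq_or_ne p 0 with hp | hp
  · -- then `a = b = 0` and the quotient is the junk value `0 / 0 = 0`
    simp [hden, hp]
  rw [hnum, hden, mul_div_mul_left _ _ hp, norm_div, div_lt_one ((norm_nonneg _).trans_lt hlt)]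
  exact hlt

end Complex

lemma deriv_sub_const_mul_eq_of_eventuallyEq {f₁ f₂ g₁ g₂ : ℂ → ℂ} {c z : ℂ}
    (hf₁ : DifferentiableAt ℂ f₁ z) (hf₂ : DifferentiableAt ℂ f₂ z)
    (hg₁ : DifferentiableAt ℂ g₁ z) (hg₂ : DifferentiableAt ℂ g₂ z)
    (h : (fun w ↦ f₁ w - c * g₁ w) =ᶠ[nhds z] fun w ↦ f₂ w - c * g₂ w) :
    deriv f₁ z - c * deriv g₁ z = deriv f₂ z - c * deriv g₂ z := by
  have := h.deriv_eq
  rwa [deriv_fun_sub hf₁ (hg₁.const_mul c), deriv_fun_sub hf₂ (hg₂.const_mul c),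
    deriv_const_mul c hg₁, deriv_const_mul c hg₂] at this

theorem linear_combination_dilatation_lt_one_general
    (h₁ h₂ g₁ g₂ ω₁ ω₂ : ℂ → ℂ) (lam : ℂ) (t : ℝ)
    (hh₁ : DifferentiableOn ℂ h₁ (ball 0 1)) (hh₂ : DifferentiableOn ℂ h₂ (ball 0 1))
    (hg₁ : DifferentiableOn ℂ g₁ (ball 0 1)) (hg₂ : DifferentiableOn ℂ g₂ (ball 0 1))
    (hω₁ : ∀ z ∈ ball (0 : ℂ) 1, ‖ω₁ z‖ < 1)
    (hω₂ : ∀ z ∈ ball (0 : ℂ) 1, ‖ω₂ z‖ < 1)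
    (hlam : ‖lam‖ = 1) (ht : t ∈ Set.Icc (0 : ℝ) 1)
    (hdil₁ : ∀ z ∈ ball (0 : ℂ) 1, deriv g₁ z = ω₁ z * deriv h₁ z)
    (hdil₂ : ∀ z ∈ ball (0 : ℂ) 1, deriv g₂ z = ω₂ z * deriv h₂ z)
    (hshear : ∀ z ∈ ball (0 : ℂ) 1, h₁ z - lam * g₁ z = h₂ z - lam * g₂ z) :
    ∀ z ∈ ball (0 : ℂ) 1,
      ‖(↑t * deriv g₁ z + (1 - ↑t) * deriv g₂ z) /
        (↑t * deriv h₁ z + (1 - ↑t) * deriv h₂ z)‖ < 1 := by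
  intro z hz
  have hnhds : ball (0 : ℂ) 1 ∈ nhds z := isOpen_ball.mem_nhds hz
  have hderiv := deriv_sub_const_mul_eq_of_eventuallyEq (hh₁.differentiableAt hnhds)
    (hh₂.differentiableAt hnhds) (hg₁.differentiableAt hnhds) (hg₂.differentiableAt hnhds)
    (Filter.eventually_of_mem hnhds hshear)
  rw [hdil₁ z hz, hdil₂ z hz] at hderiv ⊢
  have hlam_mul : ∀ ω : ℂ, ‖ω‖ < 1 → ‖lam * ω‖ < 1 := fun ω hω ↦ by rwa [norm_mul, hlam, one_mul]
  have key := norm_div_lt_one_of_mul_one_sub_eq ht (hlam_mul _ (hω₁ z hz)) (hlam_mul _ (hω₂ z hz))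
    (a := deriv h₁ z) (b := deriv h₂ z) (by linear_combination hderiv)
  rw [← one_mul ‖_ / _‖, ← hlam, ← norm_mul, mul_div_assoc']
  convert key using 3
  ring

/-- Lemma 2.1 (local univalence of linear combinations).
If `f_j = h_j + conj g_j` are sense-preserving with dilatations `ω_j` (`g_j' = ω_j h_j'`,
`h_j' ≠ 0`, `|ω_j| < 1`) and `h₁ - λ g₁ = h₂ - λ g₂` on the unit disk for some unimodular
`λ`, then the dilatation `ω₃ = (t g₁' + (1-t) g₂')/(t h₁' + (1-t) h₂')` of the linear
combination satisfies `|ω₃| < 1` on the unit disk. -/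
theorem linear_combination_dilatation_lt_one
    (h₁ h₂ g₁ g₂ ω₁ ω₂ : ℂ → ℂ) (lam : ℂ) (t : ℝ)
    (hh₁ : DifferentiableOn ℂ h₁ (ball 0 1)) (hh₂ : DifferentiableOn ℂ h₂ (ball 0 1))
    (hg₁ : DifferentiableOn ℂ g₁ (ball 0 1)) (hg₂ : DifferentiableOn ℂ g₂ (ball 0 1))
    (hω₁a : DifferentiableOn ℂ ω₁ (ball 0 1)) (hω₂a : DifferentiableOn ℂ ω₂ (ball 0 1))
    (hω₁ : ∀ z ∈ ball (0 : ℂ) 1, ‖ω₁ z‖ < 1)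
    (hω₂ : ∀ z ∈ ball (0 : ℂ) 1, ‖ω₂ z‖ < 1)
    (hlam : ‖lam‖ = 1) (ht : t ∈ Set.Icc (0 : ℝ) 1)
    (hdil₁ : ∀ z ∈ ball (0 : ℂ) 1, deriv g₁ z = ω₁ z * deriv h₁ z)
    (hdil₂ : ∀ z ∈ ball (0 : ℂ) 1, deriv g₂ z = ω₂ z * deriv h₂ z)
    (hne₁ : ∀ z ∈ ball (0 : ℂ) 1, deriv h₁ z ≠ 0)
    (hne₂ : ∀ z ∈ ball (0 : ℂ) 1, deriv h₂ z ≠ 0)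
    (hshear : ∀ z ∈ ball (0 : ℂ) 1, h₁ z - lam * g₁ z = h₂ z - lam * g₂ z) :
    ∀ z ∈ ball (0 : ℂ) 1,
      ‖(↑t * deriv g₁ z + (1 - ↑t) * deriv g₂ z) /
        (↑t * deriv h₁ z + (1 - ↑t) * deriv h₂ z)‖ < 1 :=
  linear_combination_dilatation_lt_one_general h₁ h₂ g₁ g₂ ω₁ ω₂ lam t hh₁ hh₂ hg₁ hg₂ hω₁ hω₂ hlam
    ht hdil₁ hdil₂ hshear
end

section
/- Fix γ ∈ [0,1], α ∈ [-1,1], and θ ∈ (0,π). Define p̃(z) = γ·(1 - 2αz + z²)/(1 - z²) + (1-γ)·(1 - z²)/((1 + z e^{iθ})(1 + z e^{-iθ})) for z in the open unit disk 𝔻 (where 1 - z² ≠ 0 and (1+ze^{iθ})(1+ze^{-iθ}) ≠ 0 hold automatically for |z| < 1 and θ ∈ (0,π)). Then Re(p̃(z)) > 0 for all z ∈ 𝔻. -/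
/-!
Writing `c = cos θ`, the second denominator factors as `1 + 2cz + z²`, so both summands are of the
form `(1 - 2cz + z²)/(1 - z²)` with `|c| ≤ 1` or the reciprocal of such a quotient. Multiplying by
the conjugate of the denominator, `Re ((1 - 2cz + z²)/(1 - z²))` is a positive multiple of
`(1 - |z|²)(1 + |z|² - 2c Re z)`, which is positive on the disk because `2|c Re z| ≤ 2|z| < 1 + |z|²`.
Reciprocals and convex combinations preserve the open right half-plane.
-/

open Complex ComplexConjugate Metric

theorem Complex.re_div_pos_of_re_mul_conj_pos {w v : ℂ} (h : 0 < (w * conj v).re) :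
    0 < (w / v).re := by
  have hv : v ≠ 0 := by
    rintro rfl
    simp at h
  rw [div_eq_mul_inv, inv_def, ← mul_assoc, re_mul_ofReal]
  exact mul_pos h (inv_pos.2 (normSq_pos.2 hv))

theorem Complex.re_inv_pos {w : ℂ} (h : 0 < w.re) : 0 < w⁻¹.re := by
  have hw : w ≠ 0 := by
    rintro rfl
    simp at h
  rw [inv_re]
  exact div_pos h (normSq_pos.2 hw)

theorem Complex.one_add_normSq_sub_two_mul_re_pos {c : ℝ} (hc : |c| ≤ 1) {z : ℂ} (hz : ‖z‖ < 1) :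
    0 < 1 + normSq z - 2 * c * z.re := by
  have hcz : c * z.re ≤ ‖z‖ :=
    calc c * z.re ≤ |c| * |z.re| := by rw [← abs_mul]; exact le_abs_self _
      _ ≤ 1 * ‖z‖ := mul_le_mul hc (abs_re_le_norm z) (abs_nonneg _) zero_le_one
      _ = ‖z‖ := one_mul _
  rw [normSq_eq_norm_sq]
  nlinarith [sq_pos_of_pos (sub_pos.2 hz)]

theorem Complex.re_mul_conj_one_sub_sq (c : ℝ) (z : ℂ) :
    ((1 - 2 * c * z + z ^ 2) * conj (1 - z ^ 2)).re =
      (1 - normSq z) * (1 + normSq z - 2 * c * z.re) := by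
  simp only [map_sub, map_one, pow_two, mul_re, mul_im, sub_re, sub_im, add_re, add_im,
    one_re, one_im, conj_re, conj_im, ofReal_re, ofReal_im, re_ofNat, im_ofNat, normSq_apply]
  ring

theorem Complex.re_div_one_sub_sq_pos {c : ℝ} (hc : |c| ≤ 1) {z : ℂ} (hz : ‖z‖ < 1) :
    0 < ((1 - 2 * c * z + z ^ 2) / (1 - z ^ 2)).re := by
  apply re_div_pos_of_re_mul_conj_pos
  rw [re_mul_conj_one_sub_sq]
  have hnz : normSq z < 1 := by rw [normSq_eq_norm_sq]; nlinarith [norm_nonneg z]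
  exact mul_pos (sub_pos.2 hnz) (one_add_normSq_sub_two_mul_re_pos hc hz)

theorem Complex.re_one_sub_sq_div_pos {c : ℝ} (hc : |c| ≤ 1) {z : ℂ} (hz : ‖z‖ < 1) :
    0 < ((1 - z ^ 2) / (1 + 2 * c * z + z ^ 2)).re := by
  have h := re_inv_pos (re_div_one_sub_sq_pos (c := -c) (by rwa [abs_neg]) hz)
  rw [inv_div] at h
  convert h using 3
  push_cast
  ring

theorem Complex.one_add_mul_exp_mul_one_add_mul_exp_neg (z : ℂ) (θ : ℝ) :
    (1 + z * exp (I * θ)) * (1 + z * exp (-I * θ)) = 1 + 2 * Real.cos θ * z + z ^ 2 := by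
  have hprod : exp (I * θ) * exp (-I * θ) = 1 := by rw [← exp_add]; simp
  have hsum : exp (I * θ) + exp (-I * θ) = 2 * Real.cos θ := by
    rw [ofReal_cos, two_cos, mul_comm I, neg_mul, neg_mul, mul_comm I]
  linear_combination z ^ 2 * hprod + z * hsum

theorem Complex.re_convex_combination_pos {γ : ℝ} (hγ : γ ∈ Set.Icc (0 : ℝ) 1) {w v : ℂ}
    (hw : 0 < w.re) (hv : 0 < v.re) : 0 < ((γ : ℂ) * w + (1 - (γ : ℂ)) * v).re := by
  have h := convex_halfSpace_re_gt 0 hw hv hγ.1 (sub_nonneg.2 hγ.2) (add_sub_cancel γ 1)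
  simpa only [Set.mem_ofPred_eq, real_smul, ofReal_sub, ofReal_one] using h

theorem re_ptilde_pos_general (γ α θ : ℝ) (hγ : γ ∈ Set.Icc (0 : ℝ) 1)
    (hα : α ∈ Set.Icc (-1 : ℝ) 1) :
    ∀ z ∈ ball (0 : ℂ) 1,
      0 < ((γ : ℂ) * (1 - 2 * α * z + z ^ 2) / (1 - z ^ 2) +
        (1 - (γ : ℂ)) * (1 - z ^ 2) /
          ((1 + z * exp (I * θ)) * (1 + z * exp (-I * θ)))).re := by
  intro z hz
  rw [mem_ball_zero_iff] at hz
  rw [one_add_mul_exp_mul_one_add_mul_exp_neg, mul_div_assoc, mul_div_assoc]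
  exact re_convex_combination_pos hγ (re_div_one_sub_sq_pos (abs_le.2 hα) hz)
    (re_one_sub_sq_div_pos (Real.abs_cos_le_one θ) hz)

/-- the function `p̃` from Corollary 3.2 has positive real part on the disk. -/
theorem re_ptilde_pos (γ α θ : ℝ) (hγ : γ ∈ Set.Icc (0 : ℝ) 1)
    (hα : α ∈ Set.Icc (-1 : ℝ) 1) (hθ : θ ∈ Set.Ioo 0 Real.pi) :
    ∀ z ∈ ball (0 : ℂ) 1,
      0 < ((γ : ℂ) * (1 - 2 * α * z + z ^ 2) / (1 - z ^ 2) +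
        (1 - (γ : ℂ)) * (1 - z ^ 2) /
          ((1 + z * exp (I * θ)) * (1 + z * exp (-I * θ)))).re :=
  re_ptilde_pos_general γ α θ hγ hα
end
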